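/- arXiv:2410.08146 — 6 statements merged into one kernel-verified Lean document; each statement's English description precedes it below -/
import Mathlib

section
/- Let α be a nonempty finite type and p : α → ℝ a probability vector. Let f, g : α → ℝ with E_p[f] = 0, and for γ ∈ ℝ let q_γ be the exponential tilt of p by γ·(f+g). If V := Var_p[g] + E_p[f·g] > 0, then there exists γ₀ > 0 such that for all γ with 0 < γ ≤ γ₀, ∑_a q_γ(a) · g a − E_p[g] ≥ (γ/2) · V. -/
/-! The tilted mean `γ ↦ E_{q_γ}[g]` is differentiable at `0`, where `q_0 = p`, with derivative
`Cov_p(f + g, g) = Var_p[g] + E_p[f g] = V` because `E_p[f] = 0`. As `V / 2 < V`, its difference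
quotient on the right of `0` stays above `V / 2` near `0`. -/

open Finset Real Filter Topology

theorem HasDerivAt.exists_add_mul_le_of_lt {φ : ℝ → ℝ} {φ' c x : ℝ} (h : HasDerivAt φ φ' x)
    (hc : c < φ') : ∃ δ > 0, ∀ t, 0 < t → t ≤ δ → φ x + c * t ≤ φ (x + t) := by
  have hslope : ∀ᶠ t in 𝓝[>] 0, 0 < t ∧ c < t⁻¹ * (φ (x + t) - φ x) :=
    eventually_mem_nhdsWithin.and (h.tendsto_slope_zero_right.eventually (lt_mem_nhds hc))
  obtain ⟨δ, hδ, hsub⟩ := mem_nhdsGT_iff_exists_Ioc_subset.mp hslope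
  refine ⟨δ, hδ, fun t ht htδ => ?_⟩
  obtain ⟨-, hct⟩ := hsub ⟨ht, htδ⟩
  rw [lt_inv_mul_iff₀ ht] at hct
  linarith

section Tilt

variable {α : Type*} [Fintype α]

/-- `E_{q_t}[k]` for the exponential tilt `q_t` of `p` by `t • h`. -/
noncomputable def tiltedMean (p h k : α → ℝ) (t : ℝ) : ℝ :=
  (∑ a, p a * k a * exp (t * h a)) / ∑ a, p a * exp (t * h a)

theorem sum_tilt_mul_eq_tiltedMean (p h k : α → ℝ) (t : ℝ) :
    ∑ a, (p a * exp (t * h a) / ∑ b, p b * exp (t * h b)) * k a = tiltedMean p h k t := by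
  rw [tiltedMean, sum_div]
  exact sum_congr rfl fun a _ => by ring

theorem tiltedMean_zero (p h k : α → ℝ) (hp1 : ∑ a, p a = 1) :
    tiltedMean p h k 0 = ∑ a, p a * k a := by
  simp [tiltedMean, hp1]

theorem hasDerivAt_sum_mul_exp_zero (w h : α → ℝ) :
    HasDerivAt (fun t => ∑ a, w a * exp (t * h a)) (∑ a, w a * h a) 0 := by
  refine HasDerivAt.fun_sum fun a _ => ?_
  simpa using (((hasDerivAt_id (0 : ℝ)).mul_const (h a)).exp.const_mul (w a))

theorem hasDerivAt_tiltedMean_zero (p h k : α → ℝ) (hp1 : ∑ a, p a = 1) :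
    HasDerivAt (tiltedMean p h k)
      ((∑ a, p a * h a * k a) - (∑ a, p a * h a) * ∑ a, p a * k a) 0 := by
  refine ((hasDerivAt_sum_mul_exp_zero (fun a => p a * k a) h).div
    (hasDerivAt_sum_mul_exp_zero p h) (by simp [hp1])).congr_deriv ?_
  simp only [zero_mul, exp_zero, mul_one, hp1, div_one, one_pow, mul_right_comm _ (k _)]
  ring

theorem sum_mul_sub_sq_eq (p g : α → ℝ) (hp1 : ∑ a, p a = 1) :
    ∑ a, p a * (g a - ∑ b, p b * g b) ^ 2 = ∑ a, p a * g a ^ 2 - (∑ a, p a * g a) ^ 2 := by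
  set c := ∑ b, p b * g b
  have hexpand : ∀ a, p a * (g a - c) ^ 2 = p a * g a ^ 2 - 2 * c * (p a * g a) + c ^ 2 * p a :=
    fun a => by ring
  simp only [hexpand, sum_add_distrib, sum_sub_distrib, ← mul_sum, hp1]
  ring

end Tilt

theorem tilt_improvement_general {α : Type*} [Fintype α]
    (p : α → ℝ) (hp1 : ∑ a, p a = 1)
    (f g : α → ℝ) (hf : ∑ a, p a * f a = 0)
    (hV : 0 < (∑ a, p a * (g a - ∑ b, p b * g b) ^ 2) + ∑ a, p a * (f a * g a)) :
    ∃ γ₀ > (0 : ℝ), ∀ γ : ℝ, 0 < γ → γ ≤ γ₀ →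
      (∑ a, (p a * Real.exp (γ * (f a + g a)) /
          (∑ b, p b * Real.exp (γ * (f b + g b)))) * g a) - (∑ a, p a * g a)
        ≥ (γ / 2) * ((∑ a, p a * (g a - ∑ b, p b * g b) ^ 2) + ∑ a, p a * (f a * g a)) := by
  set V := (∑ a, p a * (g a - ∑ b, p b * g b) ^ 2) + ∑ a, p a * (f a * g a)
  have hcov : (∑ a, p a * (f a + g a) * g a) - (∑ a, p a * (f a + g a)) * ∑ a, p a * g a = V := by
    simp only [V, sum_mul_sub_sq_eq p g hp1, mul_add, add_mul, sum_add_distrib, hf]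
    simp only [mul_assoc, sq]
    ring
  obtain ⟨γ₀, hγ₀, hmean⟩ :=
    ((hasDerivAt_tiltedMean_zero p (fun a => f a + g a) g hp1).congr_deriv hcov).exists_add_mul_le_of_lt
      (half_lt_self hV)
  refine ⟨γ₀, hγ₀, fun γ hγ hγγ₀ => ?_⟩
  have hgain := hmean γ hγ hγγ₀
  rw [tiltedMean_zero p _ g hp1, zero_add] at hgain
  rw [sum_tilt_mul_eq_tiltedMean p (fun a => f a + g a) g γ]
  linarith

/-- If `V := Var_p[g] + E_p[f·g] > 0` (with `E_p[f] = 0`), then there is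
`γ₀ > 0` such that for all `0 < γ ≤ γ₀`, the expected value of `g` under the exponential
tilt of `p` by `γ·(f+g)` exceeds `E_p[g]` by at least `(γ/2)·V`. -/
theorem tilt_improvement {α : Type*} [Fintype α] [Nonempty α]
    (p : α → ℝ) (hp : ∀ a, 0 ≤ p a) (hp1 : ∑ a, p a = 1)
    (f g : α → ℝ) (hf : ∑ a, p a * f a = 0)
    (hV : 0 < (∑ a, p a * (g a - ∑ b, p b * g b) ^ 2) + ∑ a, p a * (f a * g a)) :
    ∃ γ₀ > (0 : ℝ), ∀ γ : ℝ, 0 < γ → γ ≤ γ₀ →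
      (∑ a, (p a * Real.exp (γ * (f a + g a)) /
          (∑ b, p b * Real.exp (γ * (f b + g b)))) * g a) - (∑ a, p a * g a)
        ≥ (γ / 2) * ((∑ a, p a * (g a - ∑ b, p b * g b) ^ 2) + ∑ a, p a * (f a * g a)) :=
  tilt_improvement_general p hp1 f g hf hV
end

section
/- Let K ≥ 1 be a natural number and let x, y be real numbers with 0 ≤ y ≤ x ≤ 1/K. Then (1 − y)^K − (1 − x)^K ≥ (K / e) · (x − y), where e = exp 1. -/
/-!
The tangent-line bound for `t ↦ t ^ K` gives
`(1 - y) ^ K - (1 - x) ^ K ≥ K (1 - x) ^ (K - 1) (x - y)`, and for `x ≤ 1 / K`,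
`(1 - x) ^ (K - 1) ≥ (1 - 1 / K) ^ (K - 1) = (1 + 1 / (K - 1)) ^ (-(K - 1)) ≥ e⁻¹`.
-/

open Finset Real

lemma natCast_mul_pow_pred_mul_sub_le_pow_sub_pow {R : Type*} [CommRing R] [PartialOrder R]
    [IsOrderedRing R] {a b : R} (hb : 0 ≤ b) (hba : b ≤ a) (n : ℕ) :
    n * b ^ (n - 1) * (a - b) ≤ a ^ n - b ^ n := by
  rw [← geom_sum₂_mul]
  have hterm : ∀ i ∈ range n, b ^ (n - 1) ≤ a ^ i * b ^ (n - 1 - i) := fun i hi => by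
    calc b ^ (n - 1) = b ^ i * b ^ (n - 1 - i) := by
          rw [← pow_add]; congr 1; have := mem_range.mp hi; omega
      _ ≤ a ^ i * b ^ (n - 1 - i) := by gcongr
  have hsum := card_nsmul_le_sum (range n) _ _ hterm
  rw [card_range, nsmul_eq_mul] at hsum
  exact mul_le_mul_of_nonneg_right hsum (sub_nonneg.mpr hba)

-- At `K = 0` the junk values `0⁻¹ = 0` and `0 - 1 = 0` make the right side `1`.
lemma Real.exp_neg_one_le_one_sub_inv_pow_pred (K : ℕ) :
    exp (-1) ≤ (1 - (K : ℝ)⁻¹) ^ (K - 1) := by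
  cases K with
  | zero => simp
  | succ n =>
    have hpow_eq : (1 - ((n + 1 : ℕ) : ℝ)⁻¹) ^ n = ((1 + (n : ℝ)⁻¹) ^ n)⁻¹ := by
      rcases n.eq_zero_or_pos with rfl | hn
      · simp
      · rw [← inv_pow]; congr 1; field_simp; push_cast; ring
    rw [Nat.add_sub_cancel, hpow_eq, exp_neg]
    exact inv_anti₀ (by positivity) one_add_inv_pow_le_exp

lemma Real.exp_neg_one_le_one_sub_pow_pred {K : ℕ} {x : ℝ} (hx : x ≤ (K : ℝ)⁻¹) :
    exp (-1) ≤ (1 - x) ^ (K - 1) :=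
  (exp_neg_one_le_one_sub_inv_pow_pred K).trans <|
    pow_le_pow_left₀ (sub_nonneg.mpr K.cast_inv_le_one) (by linarith) _

theorem bestOfK_lower_lipschitz_general (K : ℕ) (x y : ℝ)
    (hxy : y ≤ x) (hx : x ≤ 1 / (K : ℝ)) :
    ((K : ℝ) / Real.exp 1) * (x - y) ≤ (1 - y) ^ K - (1 - x) ^ K := by
  rw [one_div] at hx
  have h1x : 0 ≤ 1 - x := sub_nonneg.mpr (hx.trans K.cast_inv_le_one)
  calc (K : ℝ) / exp 1 * (x - y) = K * exp (-1) * ((1 - y) - (1 - x)) := by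
        rw [exp_neg]; ring
    _ ≤ K * (1 - x) ^ (K - 1) * ((1 - y) - (1 - x)) := by
        gcongr
        · linarith
        · exact exp_neg_one_le_one_sub_pow_pred hx
    _ ≤ (1 - y) ^ K - (1 - x) ^ K :=
        natCast_mul_pow_pred_mul_sub_le_pow_sub_pow h1x (by linarith) K

/-- For `K ≥ 1` and `0 ≤ y ≤ x ≤ 1/K`,
`(1 − y)^K − (1 − x)^K ≥ (K/e)·(x − y)`. -/
theorem bestOfK_lower_lipschitz (K : ℕ) (hK : 1 ≤ K) (x y : ℝ)
    (hy : 0 ≤ y) (hxy : y ≤ x) (hx : x ≤ 1 / (K : ℝ)) :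
    ((K : ℝ) / Real.exp 1) * (x - y) ≤ (1 - y) ^ K - (1 - x) ^ K :=
  bestOfK_lower_lipschitz_general K x y hxy hx
end

section
/- Let α be a nonempty finite type and p : α → ℝ a probability vector. Let K ≥ 1 be a natural number and X : α → ℝ with 0 ≤ X a ≤ 1/K for all a. Define F a = 1 − (1 − X a)^K. Then Var_p[F] ≥ (K/e)² · Var_p[X], where e = exp 1. -/
/-!
Both variances are half the `p ⊗ p`-average of squared differences, so it suffices that
`t ↦ 1 - (1 - t)^K` expands distances on `(-∞, 1/K]` by a factor of at least `K / e`. Its slope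
there is `K (1 - t)^(K-1) ≥ K (1 - 1/K)^(K-1) ≥ K / e`, the last step being `(1 + 1/n)^n ≤ e`;
Bernoulli's inequality `(1 - y)^K + K (1 - y)^(K-1) (y - x) ≤ (1 - x)^K` replaces the mean value
theorem.
-/

open Finset Real

section WeightedVariance

variable {α : Type*} [Fintype α] (p : α → ℝ)

def weightedVar (f : α → ℝ) : ℝ :=
  ∑ a, p a * (f a - ∑ b, p b * f b) ^ 2

variable {p}

theorem weightedVar_eq_half_sum_sum_sq_sub (hp1 : ∑ a, p a = 1) (f : α → ℝ) :
    weightedVar p f = (1 / 2) * ∑ a, ∑ b, p a * p b * (f a - f b) ^ 2 := by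
  unfold weightedVar
  set m := ∑ b, p b * f b with hm
  have hsq : ∀ a, p a * (f a - m) ^ 2 = p a * f a ^ 2 - 2 * m * (p a * f a) + m ^ 2 * p a :=
    fun a => by ring
  have hsq₂ : ∀ a b, p a * p b * (f a - f b) ^ 2
      = p b * (p a * f a ^ 2) - 2 * (p a * f a) * (p b * f b) + p a * (p b * f b ^ 2) :=
    fun a b => by ring
  simp only [hsq, hsq₂, sum_add_distrib, sum_sub_distrib, ← mul_sum, ← sum_mul, hp1, ← hm]
  ring

theorem sq_mul_weightedVar_le_of_mul_abs_sub_le (hp : ∀ a, 0 ≤ p a) (hp1 : ∑ a, p a = 1)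
    {f g : α → ℝ} {c : ℝ} (hc : 0 ≤ c) (hfg : ∀ a b, c * |f a - f b| ≤ |g a - g b|) :
    c ^ 2 * weightedVar p f ≤ weightedVar p g := by
  have hpair : ∀ a b, c ^ 2 * (p a * p b * (f a - f b) ^ 2) ≤ p a * p b * (g a - g b) ^ 2 := by
    intro a b
    have hsq : (c * |f a - f b|) ^ 2 ≤ |g a - g b| ^ 2 :=
      pow_le_pow_left₀ (by positivity) (hfg a b) 2
    rw [mul_pow, sq_abs, sq_abs] at hsq
    rw [mul_left_comm]
    exact mul_le_mul_of_nonneg_left hsq (mul_nonneg (hp a) (hp b))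
  rw [weightedVar_eq_half_sum_sum_sq_sub hp1, weightedVar_eq_half_sum_sum_sq_sub hp1,
    mul_left_comm]
  refine mul_le_mul_of_nonneg_left ?_ (by norm_num)
  simp only [mul_sum]
  exact sum_le_sum fun a _ => sum_le_sum fun b _ => hpair a b

end WeightedVariance

theorem exp_one_inv_le_one_sub_inv_pow_pred {K : ℕ} (hK : 1 ≤ K) :
    (exp 1)⁻¹ ≤ (1 - 1 / (K : ℝ)) ^ (K - 1) := by
  obtain ⟨n, rfl⟩ := Nat.exists_eq_add_of_le' hK
  rcases Nat.eq_zero_or_pos n with rfl | hn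
  · simpa using inv_le_one_of_one_le₀ (one_le_exp zero_le_one)
  have hn' : (0 : ℝ) < n := by exact_mod_cast hn
  have hbase : 1 - 1 / ((n + 1 : ℕ) : ℝ) = (1 + 1 / (n : ℝ))⁻¹ := by
    push_cast
    field_simp
    ring
  have hpow : (1 + 1 / (n : ℝ)) ^ n ≤ exp 1 :=
    calc (1 + 1 / (n : ℝ)) ^ n ≤ exp (1 / n) ^ n := by
          gcongr
          linarith [add_one_le_exp (1 / (n : ℝ))]
      _ = exp 1 := by rw [← exp_nat_mul, mul_one_div_cancel hn'.ne']
  rw [Nat.add_sub_cancel, hbase, inv_pow]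
  exact inv_anti₀ (by positivity) hpow

theorem div_exp_one_mul_sub_le_one_sub_pow_sub {K : ℕ} (hK : 1 ≤ K) {x y : ℝ} (hxy : x ≤ y)
    (hy : y ≤ 1 / (K : ℝ)) :
    K / exp 1 * (y - x) ≤ (1 - x) ^ K - (1 - y) ^ K := by
  have hK' : 1 / (K : ℝ) ≤ 1 := by
    rw [div_le_one (by positivity)]
    exact_mod_cast hK
  have hbernoulli := pow_add_mul_le_add_pow (a := 1 - y) (b := y - x)
    (by linarith) (by linarith) K
  calc K / exp 1 * (y - x) ≤ K * (1 - 1 / (K : ℝ)) ^ (K - 1) * (y - x) := by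
        rw [div_eq_mul_inv]
        gcongr
        exact exp_one_inv_le_one_sub_inv_pow_pred hK
    _ ≤ K * (1 - y) ^ (K - 1) * (y - x) := by
        gcongr
    _ ≤ (1 - x) ^ K - (1 - y) ^ K := by
        rw [sub_add_sub_cancel] at hbernoulli
        linarith

theorem div_exp_one_mul_abs_sub_le_abs_sub_one_sub_pow {K : ℕ} (hK : 1 ≤ K) {x y : ℝ}
    (hx : x ≤ 1 / (K : ℝ)) (hy : y ≤ 1 / (K : ℝ)) :
    K / exp 1 * |x - y| ≤ |(1 - (1 - x) ^ K) - (1 - (1 - y) ^ K)| := by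
  wlog hxy : x ≤ y generalizing x y
  · rw [abs_sub_comm x y, abs_sub_comm (1 - (1 - x) ^ K) (1 - (1 - y) ^ K)]
    exact this hy hx (le_of_not_ge hxy)
  rw [abs_sub_comm x y, abs_of_nonneg (sub_nonneg.2 hxy), sub_sub_sub_cancel_left, abs_sub_comm]
  exact (div_exp_one_mul_sub_le_one_sub_pow_sub hK hxy hy).trans (le_abs_self _)

theorem bestOfK_variance_expansion_general {α : Type*} [Fintype α]
    (p : α → ℝ) (hp : ∀ a, 0 ≤ p a) (hp1 : ∑ a, p a = 1)
    (K : ℕ) (hK : 1 ≤ K) (X : α → ℝ)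
    (hX1 : ∀ a, X a ≤ 1 / (K : ℝ))
    (F : α → ℝ) (hF : ∀ a, F a = 1 - (1 - X a) ^ K) :
    ((K : ℝ) / Real.exp 1) ^ 2 * (∑ a, p a * (X a - ∑ b, p b * X b) ^ 2)
      ≤ ∑ a, p a * (F a - ∑ b, p b * F b) ^ 2 := by
  refine sq_mul_weightedVar_le_of_mul_abs_sub_le (f := X) (g := F) hp hp1 (by positivity)
    fun a b => ?_
  rw [hF a, hF b]
  exact div_exp_one_mul_abs_sub_le_abs_sub_one_sub_pow hK (hX1 a) (hX1 b)

/-- For a probability vector `p`, `K ≥ 1`, and `X : α → ℝ` with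
`0 ≤ X a ≤ 1/K`, setting `F a = 1 − (1 − X a)^K` we have
`Var_p[F] ≥ (K/e)² · Var_p[X]`. -/
theorem bestOfK_variance_expansion {α : Type*} [Fintype α] [Nonempty α]
    (p : α → ℝ) (hp : ∀ a, 0 ≤ p a) (hp1 : ∑ a, p a = 1)
    (K : ℕ) (hK : 1 ≤ K) (X : α → ℝ)
    (hX0 : ∀ a, 0 ≤ X a) (hX1 : ∀ a, X a ≤ 1 / (K : ℝ))
    (F : α → ℝ) (hF : ∀ a, F a = 1 - (1 - X a) ^ K) :
    ((K : ℝ) / Real.exp 1) ^ 2 * (∑ a, p a * (X a - ∑ b, p b * X b) ^ 2)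
      ≤ ∑ a, p a * (F a - ∑ b, p b * F b) ^ 2 :=
  bestOfK_variance_expansion_general p hp hp1 K hK X hX1 F hF
end

section
/- Let α be a nonempty finite type and p : α → ℝ a probability vector. Let K ≥ 1 be a natural number, X : α → ℝ with 0 ≤ X a ≤ 1 for all a, and Y : α → ℝ. Define F a = 1 − (1 − X a)^K. Then |E_p[(F − E_p[F])·(Y − E_p[Y])]| ≤ K · sqrt(Var_p[X]) · sqrt(Var_p[Y]). -/
private lemma pow_lipschitz (n : ℕ) : ∀ a b : ℝ, 0 ≤ a → a ≤ 1 → 0 ≤ b → b ≤ 1 →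
    |a ^ n - b ^ n| ≤ n * |a - b| := by
  induction n with
  | zero => intro a b _ _ _ _; simp
  | succ n ih =>
    intro a b ha0 ha1 hb0 hb1
    have key : a ^ (n+1) - b ^ (n+1) = a * (a ^ n - b ^ n) + b ^ n * (a - b) := by ring
    have ha : |a| ≤ 1 := abs_le.mpr ⟨by linarith, ha1⟩
    have hbn : |b ^ n| ≤ 1 := by
      rw [abs_of_nonneg (pow_nonneg hb0 n)]; exact pow_le_one₀ hb0 hb1
    have hih := ih a b ha0 ha1 hb0 hb1
    have h1 : |a * (a ^ n - b ^ n)| ≤ (n : ℝ) * |a - b| := by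
      rw [abs_mul]
      calc |a| * |a ^ n - b ^ n| ≤ 1 * ((n : ℝ) * |a - b|) :=
            mul_le_mul ha hih (abs_nonneg _) zero_le_one
        _ = (n : ℝ) * |a - b| := one_mul _
    have h2 : |b ^ n * (a - b)| ≤ |a - b| := by
      rw [abs_mul]
      calc |b ^ n| * |a - b| ≤ 1 * |a - b| :=
            mul_le_mul_of_nonneg_right hbn (abs_nonneg _)
        _ = |a - b| := one_mul _
    calc |a ^ (n+1) - b ^ (n+1)| = |a * (a ^ n - b ^ n) + b ^ n * (a - b)| := by rw [key]
      _ ≤ |a * (a ^ n - b ^ n)| + |b ^ n * (a - b)| := abs_add_le _ _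
      _ ≤ (n : ℝ) * |a - b| + |a - b| := add_le_add h1 h2
      _ = ((n + 1 : ℕ) : ℝ) * |a - b| := by push_cast; ring

private lemma F_lip (K : ℕ) (x y : ℝ) (hx0 : 0 ≤ x) (hx1 : x ≤ 1) (hy0 : 0 ≤ y) (hy1 : y ≤ 1) :
    ((1 - (1 - x) ^ K) - (1 - (1 - y) ^ K)) ^ 2 ≤ (K : ℝ) ^ 2 * (x - y) ^ 2 := by
  have h1 : |(1 - (1 - x) ^ K) - (1 - (1 - y) ^ K)| ≤ (K : ℝ) * |x - y| := by
    rw [show (1 - (1 - x) ^ K) - (1 - (1 - y) ^ K) = (1 - y) ^ K - (1 - x) ^ K by ring]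
    have := pow_lipschitz K (1 - y) (1 - x)
      (by linarith) (by linarith) (by linarith) (by linarith)
    rwa [show (1 - y) - (1 - x) = x - y by ring] at this
  calc ((1 - (1 - x) ^ K) - (1 - (1 - y) ^ K)) ^ 2
      = |(1 - (1 - x) ^ K) - (1 - (1 - y) ^ K)| ^ 2 := (sq_abs _).symm
    _ ≤ ((K : ℝ) * |x - y|) ^ 2 := pow_le_pow_left₀ (abs_nonneg _) h1 2
    _ = (K : ℝ) ^ 2 * (x - y) ^ 2 := by rw [mul_pow, sq_abs]

private lemma var_le_shift {α : Type*} [Fintype α] (p f : α → ℝ)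
    (hp1 : ∑ a, p a = 1) (c : ℝ) :
    ∑ a, p a * (f a - ∑ b, p b * f b) ^ 2 ≤ ∑ a, p a * (f a - c) ^ 2 := by
  have expand : ∀ d : ℝ, ∑ a, p a * (f a - d) ^ 2
      = (∑ a, p a * f a ^ 2) - 2 * d * (∑ a, p a * f a) + d ^ 2 := by
    intro d
    have h : ∀ a, p a * (f a - d) ^ 2
        = p a * f a ^ 2 - 2 * d * (p a * f a) + d ^ 2 * p a := fun a => by ring
    rw [Finset.sum_congr rfl (fun a _ => h a), Finset.sum_add_distrib,
      Finset.sum_sub_distrib, ← Finset.mul_sum, ← Finset.mul_sum, hp1, mul_one]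
  have hμ : (∑ b, p b * f b) = ∑ a, p a * f a := rfl
  rw [expand, expand, hμ]
  nlinarith [sq_nonneg ((∑ a, p a * f a) - c)]

/-- For a probability vector `p`, `K ≥ 1`, `X : α → ℝ` with `0 ≤ X a ≤ 1`,
`Y : α → ℝ`, and `F a = 1 − (1 − X a)^K`, we have
`|E_p[(F − E_p[F])·(Y − E_p[Y])]| ≤ K · sqrt(Var_p[X]) · sqrt(Var_p[Y])`. -/
theorem bestOfK_covariance_bound {α : Type*} [Fintype α] [Nonempty α]
    (p : α → ℝ) (hp : ∀ a, 0 ≤ p a) (hp1 : ∑ a, p a = 1)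
    (K : ℕ) (hK : 1 ≤ K) (X Y : α → ℝ)
    (hX0 : ∀ a, 0 ≤ X a) (hX1 : ∀ a, X a ≤ 1)
    (F : α → ℝ) (hF : ∀ a, F a = 1 - (1 - X a) ^ K) :
    |∑ a, p a * ((F a - ∑ b, p b * F b) * (Y a - ∑ b, p b * Y b))|
      ≤ (K : ℝ) * Real.sqrt (∑ a, p a * (X a - ∑ b, p b * X b) ^ 2)
          * Real.sqrt (∑ a, p a * (Y a - ∑ b, p b * Y b) ^ 2) := by
  set VF := ∑ a, p a * (F a - ∑ b, p b * F b) ^ 2 with hVFdef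
  set VX := ∑ a, p a * (X a - ∑ b, p b * X b) ^ 2 with hVXdef
  set VY := ∑ a, p a * (Y a - ∑ b, p b * Y b) ^ 2 with hVYdef
  have hVFnn : 0 ≤ VF := Finset.sum_nonneg fun a _ => mul_nonneg (hp a) (sq_nonneg _)
  have hVXnn : 0 ≤ VX := Finset.sum_nonneg fun a _ => mul_nonneg (hp a) (sq_nonneg _)
  -- Cauchy-Schwarz step
  have hCS : |∑ a, p a * ((F a - ∑ b, p b * F b) * (Y a - ∑ b, p b * Y b))|
      ≤ Real.sqrt VF * Real.sqrt VY := by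
    have key : (∑ a, p a * ((F a - ∑ b, p b * F b) * (Y a - ∑ b, p b * Y b))) ^ 2
        ≤ VF * VY := by
      have hcs := Finset.sum_mul_sq_le_sq_mul_sq Finset.univ
        (fun a => Real.sqrt (p a) * (F a - ∑ b, p b * F b))
        (fun a => Real.sqrt (p a) * (Y a - ∑ b, p b * Y b))
      have hsq : ∀ a, Real.sqrt (p a) * Real.sqrt (p a) = p a :=
        fun a => Real.mul_self_sqrt (hp a)
      have e1 : ∀ a, (Real.sqrt (p a) * (F a - ∑ b, p b * F b))
          * (Real.sqrt (p a) * (Y a - ∑ b, p b * Y b))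
          = p a * ((F a - ∑ b, p b * F b) * (Y a - ∑ b, p b * Y b)) := by
        intro a; rw [mul_mul_mul_comm, hsq a]
      have e2 : ∀ a, (Real.sqrt (p a) * (F a - ∑ b, p b * F b)) ^ 2
          = p a * (F a - ∑ b, p b * F b) ^ 2 := by
        intro a; rw [mul_pow, sq, hsq a]
      have e3 : ∀ a, (Real.sqrt (p a) * (Y a - ∑ b, p b * Y b)) ^ 2
          = p a * (Y a - ∑ b, p b * Y b) ^ 2 := by
        intro a; rw [mul_pow, sq, hsq a]
      simp only [e1, e2, e3] at hcs
      exact hcs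
    calc |∑ a, p a * ((F a - ∑ b, p b * F b) * (Y a - ∑ b, p b * Y b))|
        = Real.sqrt ((∑ a, p a * ((F a - ∑ b, p b * F b) * (Y a - ∑ b, p b * Y b))) ^ 2) := by
          rw [Real.sqrt_sq_eq_abs]
      _ ≤ Real.sqrt (VF * VY) := Real.sqrt_le_sqrt key
      _ = Real.sqrt VF * Real.sqrt VY := Real.sqrt_mul hVFnn _
  -- Variance comparison: VF ≤ K² VX
  set μ := ∑ b, p b * X b with hμdef
  have hμ0 : 0 ≤ μ := Finset.sum_nonneg fun a _ => mul_nonneg (hp a) (hX0 a)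
  have hμ1 : μ ≤ 1 := by
    rw [hμdef, ← hp1]
    exact Finset.sum_le_sum fun a _ => by
      calc p a * X a ≤ p a * 1 := mul_le_mul_of_nonneg_left (hX1 a) (hp a)
        _ = p a := mul_one _
  have hVar : VF ≤ (K : ℝ) ^ 2 * VX := by
    have step1 : VF ≤ ∑ a, p a * (F a - (1 - (1 - μ) ^ K)) ^ 2 :=
      var_le_shift p F hp1 _
    have step2 : ∑ a, p a * (F a - (1 - (1 - μ) ^ K)) ^ 2 ≤ (K : ℝ) ^ 2 * VX := by
      rw [hVXdef, Finset.mul_sum]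
      refine Finset.sum_le_sum fun a _ => ?_
      have h := F_lip K (X a) μ (hX0 a) (hX1 a) hμ0 hμ1
      rw [hF a]
      calc p a * ((1 - (1 - X a) ^ K) - (1 - (1 - μ) ^ K)) ^ 2
          ≤ p a * ((K : ℝ) ^ 2 * (X a - μ) ^ 2) := mul_le_mul_of_nonneg_left h (hp a)
        _ = (K : ℝ) ^ 2 * (p a * (X a - μ) ^ 2) := by ring
    linarith
  have hsqrt : Real.sqrt VF ≤ (K : ℝ) * Real.sqrt VX := by
    calc Real.sqrt VF ≤ Real.sqrt ((K : ℝ) ^ 2 * VX) := Real.sqrt_le_sqrt hVar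
      _ = (K : ℝ) * Real.sqrt VX := by
          rw [Real.sqrt_mul (sq_nonneg _), Real.sqrt_sq (Nat.cast_nonneg K)]
  calc |∑ a, p a * ((F a - ∑ b, p b * F b) * (Y a - ∑ b, p b * Y b))|
      ≤ Real.sqrt VF * Real.sqrt VY := hCS
    _ ≤ (K : ℝ) * Real.sqrt VX * Real.sqrt VY :=
        mul_le_mul_of_nonneg_right hsqrt (Real.sqrt_nonneg _)
end

section
/- Let α be a nonempty finite type and p : α → ℝ a probability vector, and let f, g : α → ℝ. Then E_p[|f − g|] ≤ |E_p[f] − E_p[g]| + sqrt(Var_p[f]) + sqrt(Var_p[g]). -/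
/-! Pointwise, `|f - g| ≤ |E f - E g| + |f - E f| + |g - E g|`; averaging against `p` and bounding
each mean absolute deviation by the standard deviation (Cauchy–Schwarz) gives the claim. -/

open Finset

/-- Cauchy–Schwarz against the weights: `∑ p |h| = ∑ √p · (√p |h|)`. -/
theorem sum_mul_abs_le_sqrt_mul_sqrt {ι : Type*} (s : Finset ι) {p : ι → ℝ}
    (hp : ∀ i, 0 ≤ p i) (h : ι → ℝ) :
    ∑ i ∈ s, p i * |h i| ≤ √(∑ i ∈ s, p i) * √(∑ i ∈ s, p i * h i ^ 2) := by
  refine le_of_eq_of_le ?_ (Real.sum_sqrt_mul_sqrt_le s hp fun i =>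
    mul_nonneg (hp i) (sq_nonneg (h i)))
  refine sum_congr rfl fun i _ => ?_
  rw [Real.sqrt_mul (hp i), Real.sqrt_sq_eq_abs, ← mul_assoc, Real.mul_self_sqrt (hp i)]

theorem abs_sub_le_abs_sub_add_abs_sub_add_abs_sub (x y a b : ℝ) :
    |x - y| ≤ |a - b| + |x - a| + |y - b| :=
  calc |x - y| = |(a - b) + (x - a) - (y - b)| := by ring_nf
    _ ≤ |(a - b) + (x - a)| + |y - b| := abs_sub _ _
    _ ≤ |a - b| + |x - a| + |y - b| := by gcongr; exact abs_add_le _ _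

theorem mean_abs_diff_bound_general {α : Type*} [Fintype α]
    (p : α → ℝ) (hp : ∀ a, 0 ≤ p a) (hp1 : ∑ a, p a = 1)
    (f g : α → ℝ) :
    ∑ a, p a * |f a - g a|
      ≤ |(∑ a, p a * f a) - ∑ a, p a * g a|
        + Real.sqrt (∑ a, p a * (f a - ∑ b, p b * f b) ^ 2)
        + Real.sqrt (∑ a, p a * (g a - ∑ b, p b * g b) ^ 2) := by
  set Ef := ∑ b, p b * f b
  set Eg := ∑ b, p b * g b
  have mean_abs_le_sqrt (h : α → ℝ) : ∑ a, p a * |h a| ≤ √(∑ a, p a * h a ^ 2) := by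
    simpa [hp1] using sum_mul_abs_le_sqrt_mul_sqrt univ hp h
  calc ∑ a, p a * |f a - g a|
      ≤ ∑ a, p a * (|Ef - Eg| + |f a - Ef| + |g a - Eg|) :=
        sum_le_sum fun a _ => mul_le_mul_of_nonneg_left
          (abs_sub_le_abs_sub_add_abs_sub_add_abs_sub _ _ _ _) (hp a)
    _ = |Ef - Eg| + ∑ a, p a * |f a - Ef| + ∑ a, p a * |g a - Eg| := by
        simp only [mul_add, sum_add_distrib, ← sum_mul, hp1, one_mul]
    _ ≤ _ := by gcongr <;> exact mean_abs_le_sqrt _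

/-- For a probability vector `p` and `f, g : α → ℝ`,
`E_p[|f − g|] ≤ |E_p[f] − E_p[g]| + sqrt(Var_p[f]) + sqrt(Var_p[g])`. -/
theorem mean_abs_diff_bound {α : Type*} [Fintype α] [Nonempty α]
    (p : α → ℝ) (hp : ∀ a, 0 ≤ p a) (hp1 : ∑ a, p a = 1)
    (f g : α → ℝ) :
    ∑ a, p a * |f a - g a|
      ≤ |(∑ a, p a * f a) - ∑ a, p a * g a|
        + Real.sqrt (∑ a, p a * (f a - ∑ b, p b * f b) ^ 2)
        + Real.sqrt (∑ a, p a * (g a - ∑ b, p b * g b) ^ 2) :=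
  mean_abs_diff_bound_general p hp hp1 f g
end

section
/- Let α be a nonempty finite type and p : α → ℝ a probability vector. Let f, g : α → ℝ, and let η ≥ 0 and c > 1 be real numbers. Suppose |E_p[f] − E_p[g]| ≤ η, Var_p[g] ≤ Var_p[f], and E_p[|f − g|] ≥ c·η. Then Var_p[f] ≥ ((c − 1)/2)² · η². -/
/-!
Put `Vf = Var_p[f]`. Pointwise `|f - g| ≤ |f - E[f]| + |g - E[g]| + |E[f] - E[g]|`, and by
Cauchy–Schwarz each mean absolute deviation is at most the standard deviation, so
`c η ≤ E[|f - g|] ≤ √Vf + √Var_p[g] + η ≤ 2 √Vf + η`, i.e. `(c - 1) η / 2 ≤ √Vf`.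
-/

open Finset

section

variable {ι : Type*} {s : Finset ι} {p : ι → ℝ}

theorem sum_mul_abs_le_sqrt_sum_mul_sq (hp : ∀ a ∈ s, 0 ≤ p a) (hp1 : ∑ a ∈ s, p a = 1)
    (X : ι → ℝ) : ∑ a ∈ s, p a * |X a| ≤ √(∑ a ∈ s, p a * X a ^ 2) := by
  refine Real.le_sqrt_of_sq_le ?_
  have h := sum_sq_le_sum_mul_sum_of_sq_le_mul s hp
    (fun a ha => mul_nonneg (hp a ha) (sq_nonneg (X a)))
    (r := fun a => p a * |X a|) (fun a _ => by rw [mul_pow, sq_abs, sq (p a), mul_assoc])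
  rwa [hp1, one_mul] at h

theorem sum_mul_abs_sub_le (hp : ∀ a ∈ s, 0 ≤ p a) (hp1 : ∑ a ∈ s, p a = 1)
    (f g : ι → ℝ) (m n : ℝ) :
    ∑ a ∈ s, p a * |f a - g a| ≤
      ∑ a ∈ s, p a * |f a - m| + ∑ a ∈ s, p a * |g a - n| + |m - n| := by
  calc ∑ a ∈ s, p a * |f a - g a|
      ≤ ∑ a ∈ s, p a * (|f a - m| + |g a - n| + |m - n|) := by
        gcongr with a ha
        · exact hp a ha
        calc |f a - g a| = |(f a - m) - (g a - n) + (m - n)| := by congr 1; ring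
          _ ≤ |f a - m| + |g a - n| + |m - n| := by grw [abs_add_le, abs_sub]
    _ = ∑ a ∈ s, p a * |f a - m| + ∑ a ∈ s, p a * |g a - n| + |m - n| := by
        simp only [mul_add, sum_add_distrib, ← sum_mul, hp1, one_mul]

end

theorem complementary_prover_variance_general {α : Type*} [Fintype α]
    (p : α → ℝ) (hp : ∀ a, 0 ≤ p a) (hp1 : ∑ a, p a = 1)
    (f g : α → ℝ) (η c : ℝ) (hc : 1 < c)
    (hmean : |(∑ a, p a * f a) - ∑ a, p a * g a| ≤ η)
    (hvar : (∑ a, p a * (g a - ∑ b, p b * g b) ^ 2)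
              ≤ ∑ a, p a * (f a - ∑ b, p b * f b) ^ 2)
    (hdisagree : c * η ≤ ∑ a, p a * |f a - g a|) :
    ((c - 1) / 2) ^ 2 * η ^ 2 ≤ ∑ a, p a * (f a - ∑ b, p b * f b) ^ 2 := by
  set Vf := ∑ a, p a * (f a - ∑ b, p b * f b) ^ 2
  have hp' : ∀ a ∈ univ, 0 ≤ p a := fun a _ => hp a
  have hf := sum_mul_abs_le_sqrt_sum_mul_sq hp' hp1 (fun a => f a - ∑ b, p b * f b)
  have hg := (sum_mul_abs_le_sqrt_sum_mul_sq hp' hp1 (fun a => g a - ∑ b, p b * g b)).trans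
    (Real.sqrt_le_sqrt hvar)
  have hη : 0 ≤ η := (abs_nonneg _).trans hmean
  have hsd : (c - 1) / 2 * η ≤ √Vf := by
    linarith [sum_mul_abs_sub_le hp' hp1 f g (∑ b, p b * f b) (∑ b, p b * g b)]
  have hVf : 0 ≤ Vf := sum_nonneg fun a _ => mul_nonneg (hp a) (sq_nonneg _)
  rw [← mul_pow]
  exact (Real.le_sqrt (mul_nonneg (by linarith) hη) hVf).1 hsd

/-- If `|E_p[f] − E_p[g]| ≤ η`, `Var_p[g] ≤ Var_p[f]`, and
`E_p[|f − g|] ≥ c·η` with `η ≥ 0` and `c > 1`, then `Var_p[f] ≥ ((c−1)/2)²·η²`. -/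
theorem complementary_prover_variance {α : Type*} [Fintype α] [Nonempty α]
    (p : α → ℝ) (hp : ∀ a, 0 ≤ p a) (hp1 : ∑ a, p a = 1)
    (f g : α → ℝ) (η c : ℝ) (hη : 0 ≤ η) (hc : 1 < c)
    (hmean : |(∑ a, p a * f a) - ∑ a, p a * g a| ≤ η)
    (hvar : (∑ a, p a * (g a - ∑ b, p b * g b) ^ 2)
              ≤ ∑ a, p a * (f a - ∑ b, p b * f b) ^ 2)
    (hdisagree : c * η ≤ ∑ a, p a * |f a - g a|) :
    ((c - 1) / 2) ^ 2 * η ^ 2 ≤ ∑ a, p a * (f a - ∑ b, p b * f b) ^ 2 :=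
  complementary_prover_variance_general p hp hp1 f g η c hc hmean hvar hdisagree
end
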